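/- (Theorem 1, third part) Suppose lim_{k→∞} ‖mean(α^(k)·z^(k))‖ = 0, lim_{k→∞} ‖mean(β^(k)·s^(k))‖ = 0, lim_{k→∞} ‖s̃^(k)‖ = 0 and lim_{k→∞} ‖z̃^(k)‖ = 0, and suppose inf_k ‖ᾱ^(k)‖₂ > 0, inf_k ‖β̄^(k)‖₂ > 0, sup_k ‖α̃^(k)‖₂ < ∞ and sup_k ‖β̃^(k)‖₂ < ∞. Then lim_{k→∞} ‖s̄^(k)‖ = 0 and lim_{k→∞} ‖z̄^(k)‖ = 0; if moreover s̄^(k+1) = −ḡ^(k+1) + mean(β^(k)·s^(k)) for all k, then also lim_{k→∞} ‖ḡ^(k)‖ = 0. -/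

import Mathlib

open scoped BigOperators
open Filter

noncomputable section

/-- Row-space: each agent holds a vector in ℝⁿ (Euclidean). -/
abbrev Vec (n : ℕ) := EuclideanSpace ℝ (Fin n)

/-- A "matrix" in ℝ^{N×n}, represented row-wise. -/
abbrev Mat (N n : ℕ) := Fin N → Vec n

/-- Row-mean operator `B ↦ J·B` with `J = (1/N)·11ᵀ`. -/
def meanM {N n : ℕ} (B : Mat N n) : Mat N n := fun _ => (N : ℝ)⁻¹ • ∑ i, B i

/-- Consensus violation `B̃ = B − B̄`. -/
def tilde {N n : ℕ} (B : Mat N n) : Mat N n := B - meanM B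

/-- Frobenius norm of a row-wise matrix. -/
def fnorm {N n : ℕ} (B : Mat N n) : ℝ := Real.sqrt (∑ i, ‖B i‖ ^ 2)

/-- Spectral norm (ℓ₂ operator norm) of a square matrix. -/
def specNorm {N : ℕ} (A : Matrix (Fin N) (Fin N) ℝ) : ℝ :=
  ‖LinearMap.toContinuousLinearMap (Matrix.toEuclideanLin A)‖

/-- Action of an N×N matrix on a row-wise N×n matrix. -/
def Wact {N n : ℕ} (W : Matrix (Fin N) (Fin N) ℝ) (B : Mat N n) : Mat N n :=
  fun i => ∑ j, W i j • B j

/-- Action of a diagonal matrix `diag a` on a row-wise matrix. -/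
def dAct {N n : ℕ} (a : Fin N → ℝ) (B : Mat N n) : Mat N n := fun i => a i • B i

/-- The matrix of row-wise gradients: i-th row is `∇f_i(x_i)ᵀ`. -/
def gRow {N n : ℕ} (f : Fin N → Vec n → ℝ) (x : Mat N n) : Mat N n :=
  fun i => gradient (f i) (x i)

/-- The all-(1/N) matrix `J = (1/N)·11ᵀ`. -/
def Jmat (N : ℕ) : Matrix (Fin N) (Fin N) ℝ := Matrix.of fun _ _ => (N : ℝ)⁻¹

/-- Double stochasticity of `W`. -/
def DoublyStochastic {N : ℕ} (W : Matrix (Fin N) (Fin N) ℝ) : Prop :=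
  (∀ i, ∑ j, W i j = 1) ∧ (∀ j, ∑ i, W i j = 1)

/-!
Writing `b` for the mean weight of `β`, the mean of `β s` splits as
`mean(β s) = b • mean(s) + mean((β - b) s̃)`. The second term is bounded by `sup ‖β̃‖₂ · ‖s̃‖`,
so `b ‖s̄‖ ≤ ‖mean(β s)‖ + sup ‖β̃‖₂ · ‖s̃‖`, and a uniform lower bound on `b` turns the
vanishing of the right-hand side into that of `‖s̄‖`. The same applies to `α` and `z`, and the
recursion for `s̄` then gives `ḡ^(k+1) = mean(β^(k) s^(k)) - s̄^(k+1) → 0`.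
-/

open Topology

section

variable {N n : ℕ}

lemma fnorm_eq_norm_toLp (B : Mat N n) : fnorm B = ‖WithLp.toLp 2 B‖ := by
  rw [PiLp.norm_eq_of_L2]
  rfl

lemma fnorm_nonneg (B : Mat N n) : 0 ≤ fnorm B := Real.sqrt_nonneg _

lemma fnorm_sub_le (A B : Mat N n) : fnorm (A - B) ≤ fnorm A + fnorm B := by
  simp only [fnorm_eq_norm_toLp, WithLp.toLp_sub]
  exact norm_sub_le _ _

lemma fnorm_smul (a : ℝ) (B : Mat N n) : fnorm (a • B) = |a| * fnorm B := by
  simp only [fnorm_eq_norm_toLp, WithLp.toLp_smul, norm_smul, Real.norm_eq_abs]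

lemma sum_norm_le_sqrt_mul_fnorm (B : Mat N n) : ∑ i, ‖B i‖ ≤ √N * fnorm B := by
  have hcs := sq_sum_le_card_mul_sum_sq (s := Finset.univ) (f := fun i => ‖B i‖)
  rw [Finset.card_univ, Fintype.card_fin] at hcs
  rw [fnorm, ← Real.sqrt_mul (Nat.cast_nonneg N)]
  exact Real.le_sqrt_of_sq_le hcs

lemma fnorm_meanM (B : Mat N n) : fnorm (meanM B) = √N * ‖(N : ℝ)⁻¹ • ∑ i, B i‖ := by
  rw [fnorm, show meanM B = fun _ => (N : ℝ)⁻¹ • ∑ i, B i from rfl, Finset.sum_const,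
    Finset.card_univ, Fintype.card_fin, nsmul_eq_mul, Real.sqrt_mul (Nat.cast_nonneg N), Real.sqrt_sq (norm_nonneg _)]

lemma fnorm_meanM_le (B : Mat N n) : fnorm (meanM B) ≤ fnorm B := by
  rcases Nat.eq_zero_or_pos N with rfl | hN
  · simp [fnorm]
  have hsqrt : √N * √N = (N : ℝ) := Real.mul_self_sqrt (Nat.cast_nonneg N)
  calc fnorm (meanM B) = √N * (N : ℝ)⁻¹ * ‖∑ i, B i‖ := by
        rw [fnorm_meanM, norm_smul, Real.norm_of_nonneg (by positivity), mul_assoc]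
    _ ≤ √N * (N : ℝ)⁻¹ * (√N * fnorm B) := by
        gcongr
        exact (norm_sum_le _ _).trans (sum_norm_le_sqrt_mul_fnorm B)
    _ = fnorm B := by
        rw [mul_comm √N, mul_assoc, ← mul_assoc √N, hsqrt, ← mul_assoc,
          inv_mul_cancel₀ (by positivity), one_mul]

lemma fnorm_dAct_le {C : ℝ} (hC : 0 ≤ C) {d : Fin N → ℝ} (hd : ∀ i, |d i| ≤ C) (B : Mat N n) :
    fnorm (dAct d B) ≤ C * fnorm B := by
  rw [fnorm, fnorm, ← Real.sqrt_sq hC, ← Real.sqrt_mul (sq_nonneg C), Finset.mul_sum]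
  refine Real.sqrt_le_sqrt (Finset.sum_le_sum fun i _ => ?_)
  rw [dAct, norm_smul, Real.norm_eq_abs, mul_pow]
  gcongr
  exact hd i

lemma meanM_dAct_eq (β : Fin N → ℝ) (s : Mat N n) :
    meanM (dAct β s) = ((N : ℝ)⁻¹ * ∑ i, β i) • meanM s
      + meanM (dAct (fun i => β i - (N : ℝ)⁻¹ * ∑ j, β j) (tilde s)) := by
  rcases Nat.eq_zero_or_pos N with rfl | hN
  · exact funext fun i => i.elim0
  have hNinv : (N : ℝ) * (N : ℝ)⁻¹ = 1 := mul_inv_cancel₀ (by positivity)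
  funext i
  simp only [meanM, dAct, tilde, Pi.add_apply, Pi.smul_apply, Pi.sub_apply, smul_sub,
    sub_smul, Finset.sum_sub_distrib, ← Finset.sum_smul, ← Finset.smul_sum, Finset.sum_const,
    Finset.card_univ, Fintype.card_fin, ← Nat.cast_smul_eq_nsmul ℝ]
  linear_combination (norm := module)
    hNinv • (-((N : ℝ)⁻¹ * (N : ℝ)⁻¹ * ∑ j, β j) • ∑ j, s j)

lemma fnorm_meanM_le_of_weights {c C : ℝ} (hc : 0 < c) (hC : 0 ≤ C) {β : Fin N → ℝ}
    (hcβ : c ≤ (N : ℝ)⁻¹ * ∑ i, β i) (hCβ : ∀ i, |β i - (N : ℝ)⁻¹ * ∑ j, β j| ≤ C)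
    (s : Mat N n) :
    fnorm (meanM s) ≤ c⁻¹ * (fnorm (meanM (dAct β s)) + C * fnorm (tilde s)) := by
  set b := (N : ℝ)⁻¹ * ∑ i, β i
  set cross := meanM (dAct (fun i => β i - b) (tilde s))
  rw [le_inv_mul_iff₀ hc]
  calc c * fnorm (meanM s) ≤ b * fnorm (meanM s) := by gcongr; exact fnorm_nonneg _
    _ = fnorm (b • meanM s) := by rw [fnorm_smul, abs_of_pos (hc.trans_le hcβ)]
    _ = fnorm (meanM (dAct β s) - cross) := by rw [meanM_dAct_eq, add_sub_cancel_right]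
    _ ≤ fnorm (meanM (dAct β s)) + fnorm cross := fnorm_sub_le _ _
    _ ≤ fnorm (meanM (dAct β s)) + C * fnorm (tilde s) := by
        gcongr
        exact (fnorm_meanM_le _).trans (fnorm_dAct_le hC hCβ _)

lemma abs_le_specNorm_diagonal (d : Fin N → ℝ) (i : Fin N) :
    |d i| ≤ specNorm (Matrix.diagonal d) := by
  have hei : Matrix.toEuclideanLin (Matrix.diagonal d) (PiLp.single 2 i 1)
      = PiLp.single 2 i (d i) := by
    rw [Matrix.toLpLin_apply, PiLp.ofLp_single, Matrix.diagonal_mulVec_single, mul_one,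
      PiLp.toLp_single]
  have hle := (LinearMap.toContinuousLinearMap
    (Matrix.toEuclideanLin (Matrix.diagonal d))).le_opNorm (PiLp.single 2 i (1 : ℝ))
  rwa [LinearMap.coe_toContinuousLinearMap', hei, PiLp.norm_single, PiLp.norm_single, norm_one,
    mul_one, Real.norm_eq_abs] at hle

lemma tendsto_fnorm_meanM_of_weights {β : ℕ → Fin N → ℝ} {s : ℕ → Mat N n}
    (hmean : Tendsto (fun k => fnorm (meanM (dAct (β k) (s k)))) atTop (𝓝 0))
    (htilde : Tendsto (fun k => fnorm (tilde (s k))) atTop (𝓝 0))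
    (hinf : ∃ c > (0 : ℝ), ∀ k, c ≤ (N : ℝ)⁻¹ * ∑ i, β k i)
    (hsup : ∃ C : ℝ, ∀ k,
      specNorm (Matrix.diagonal fun i => β k i - (N : ℝ)⁻¹ * ∑ j, β k j) ≤ C) :
    Tendsto (fun k => fnorm (meanM (s k))) atTop (𝓝 0) := by
  obtain ⟨c, hc, hcβ⟩ := hinf
  obtain ⟨C, hCβ⟩ := hsup
  have hC : 0 ≤ C := (norm_nonneg _).trans (hCβ 0)
  have hbound := fun k => fnorm_meanM_le_of_weights hc hC (hcβ k)
    (fun i => (abs_le_specNorm_diagonal _ i).trans (hCβ k)) (s k)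
  refine squeeze_zero (fun k => fnorm_nonneg _) hbound ?_
  simpa using (hmean.add (htilde.const_mul C)).const_mul c⁻¹

end

theorem stmt16_general (N n : ℕ)
    (α β : ℕ → Fin N → ℝ)
    (s z g : ℕ → Mat N n)
    (hmaz : Filter.Tendsto (fun k => fnorm (meanM (dAct (α k) (z k)))) Filter.atTop (nhds 0))
    (hmbs : Filter.Tendsto (fun k => fnorm (meanM (dAct (β k) (s k)))) Filter.atTop (nhds 0))
    (hst : Filter.Tendsto (fun k => fnorm (tilde (s k))) Filter.atTop (nhds 0))
    (hzt : Filter.Tendsto (fun k => fnorm (tilde (z k))) Filter.atTop (nhds 0))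
    (hαinf : ∃ c > (0 : ℝ), ∀ k, c ≤ (N : ℝ)⁻¹ * ∑ i, α k i)
    (hβinf : ∃ c > (0 : ℝ), ∀ k, c ≤ (N : ℝ)⁻¹ * ∑ i, β k i)
    (hαsup : ∃ C : ℝ, ∀ k,
      specNorm (Matrix.diagonal fun i => α k i - (N : ℝ)⁻¹ * ∑ j, α k j) ≤ C)
    (hβsup : ∃ C : ℝ, ∀ k,
      specNorm (Matrix.diagonal fun i => β k i - (N : ℝ)⁻¹ * ∑ j, β k j) ≤ C) :
    Filter.Tendsto (fun k => fnorm (meanM (s k))) Filter.atTop (nhds 0) ∧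
    Filter.Tendsto (fun k => fnorm (meanM (z k))) Filter.atTop (nhds 0) ∧
    ((∀ k, meanM (s (k + 1)) = -(meanM (g (k + 1))) + meanM (dAct (β k) (s k))) →
      Filter.Tendsto (fun k => fnorm (meanM (g k))) Filter.atTop (nhds 0)) := by
  have hs := tendsto_fnorm_meanM_of_weights hmbs hst hβinf hβsup
  have hz := tendsto_fnorm_meanM_of_weights hmaz hzt hαinf hαsup
  refine ⟨hs, hz, fun hrec => ?_⟩
  have hg : ∀ k, fnorm (meanM (g (k + 1)))
      ≤ fnorm (meanM (dAct (β k) (s k))) + fnorm (meanM (s (k + 1))) := fun k => by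
    rw [show meanM (g (k + 1)) = meanM (dAct (β k) (s k)) - meanM (s (k + 1)) by
      rw [hrec k]; abel]
    exact fnorm_sub_le _ _
  refine (tendsto_add_atTop_iff_nat 1).mp (squeeze_zero (fun k => fnorm_nonneg _) hg ?_)
  simpa using hmbs.add (hs.comp (tendsto_add_atTop_nat 1))

/-- Theorem 1 (third part): vanishing of the mean directions. If `‖mean(α^(k)z^(k))‖ → 0`,
`‖mean(β^(k)s^(k))‖ → 0`, `‖s̃^(k)‖ → 0`, `‖z̃^(k)‖ → 0`, with `inf_k ‖ᾱ^(k)‖₂ > 0`,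
`inf_k ‖β̄^(k)‖₂ > 0`, `sup_k ‖α̃^(k)‖₂ < ∞`, `sup_k ‖β̃^(k)‖₂ < ∞`, then
`‖s̄^(k)‖ → 0` and `‖z̄^(k)‖ → 0`; if moreover `s̄^(k+1) = −ḡ^(k+1) + mean(β^(k)s^(k))`
for all `k`, then also `‖ḡ^(k)‖ → 0`. -/
theorem stmt16 (N n : ℕ) (hN : 1 ≤ N) (hn : 1 ≤ n)
    (α β : ℕ → Fin N → ℝ) (hα : ∀ k i, 0 ≤ α k i) (hβ : ∀ k i, 0 ≤ β k i)
    (s z g : ℕ → Mat N n)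
    (hmaz : Filter.Tendsto (fun k => fnorm (meanM (dAct (α k) (z k)))) Filter.atTop (nhds 0))
    (hmbs : Filter.Tendsto (fun k => fnorm (meanM (dAct (β k) (s k)))) Filter.atTop (nhds 0))
    (hst : Filter.Tendsto (fun k => fnorm (tilde (s k))) Filter.atTop (nhds 0))
    (hzt : Filter.Tendsto (fun k => fnorm (tilde (z k))) Filter.atTop (nhds 0))
    (hαinf : ∃ c > (0 : ℝ), ∀ k, c ≤ (N : ℝ)⁻¹ * ∑ i, α k i)
    (hβinf : ∃ c > (0 : ℝ), ∀ k, c ≤ (N : ℝ)⁻¹ * ∑ i, β k i)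
    (hαsup : ∃ C : ℝ, ∀ k,
      specNorm (Matrix.diagonal fun i => α k i - (N : ℝ)⁻¹ * ∑ j, α k j) ≤ C)
    (hβsup : ∃ C : ℝ, ∀ k,
      specNorm (Matrix.diagonal fun i => β k i - (N : ℝ)⁻¹ * ∑ j, β k j) ≤ C) :
    Filter.Tendsto (fun k => fnorm (meanM (s k))) Filter.atTop (nhds 0) ∧
    Filter.Tendsto (fun k => fnorm (meanM (z k))) Filter.atTop (nhds 0) ∧
    ((∀ k, meanM (s (k + 1)) = -(meanM (g (k + 1))) + meanM (dAct (β k) (s k))) →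
      Filter.Tendsto (fun k => fnorm (meanM (g k))) Filter.atTop (nhds 0)) :=
  stmt16_general N n α β s z g hmaz hmbs hst hzt hαinf hβinf hαsup hβsup
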